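/- Let E be a real Banach space and A an r_L-dense subset of E × E*. Then the monotone polar A^μ is contained in the norm-closure of A in E × E*. -/

import Mathlib

/-- `r_L(x, x*) = ½‖x‖² + ½‖x*‖² + ⟨x, x*⟩`. -/
noncomputable def rL {E : Type*} [NormedAddCommGroup E] [NormedSpace ℝ E]
    (x : E) (x' : StrongDual ℝ E) : ℝ :=
  1 / 2 * ‖x‖ ^ 2 + 1 / 2 * ‖x'‖ ^ 2 + x' x

/-- `A ⊆ E × E*` is `r_L`-dense: for every `(y, y*)`,
`inf_{(s,s*) ∈ A} r_L(s - y, s* - y*) = 0` (since `r_L ≥ 0`, this means for every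
`ε > 0` there is `(s, s*) ∈ A` with `r_L(s - y, s* - y*) < ε`). -/
def RLDense {E : Type*} [NormedAddCommGroup E] [NormedSpace ℝ E]
    (A : Set (E × StrongDual ℝ E)) : Prop :=
  ∀ (y : E) (y' : StrongDual ℝ E), ∀ ε > (0 : ℝ),
    ∃ p ∈ A, rL (p.1 - y) (p.2 - y') < ε

/-- The monotone polar `A^μ` of `A ⊆ E × E*`. -/
def monoPolar {E : Type*} [NormedAddCommGroup E] [NormedSpace ℝ E]
    (A : Set (E × StrongDual ℝ E)) : Set (E × StrongDual ℝ E) :=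
  {p | ∀ q ∈ A, 0 ≤ (q.2 - p.2) (q.1 - p.1)}

/-!
If `(x, x*) ∈ A^μ`, any `(s, s*) ∈ A` has `⟨s - x, s* - x*⟩ ≥ 0`, so the pairing term of
`r_L(s - x, s* - x*)` can be dropped and `r_L` dominates `½‖(s, s*) - (x, x*)‖²`.
Points of `A` with `r_L(s - x, s* - x*)` small, which `r_L`-density provides, are therefore
norm-close to `(x, x*)`.
-/

section

variable {E : Type*} [NormedAddCommGroup E] [NormedSpace ℝ E]

theorem sq_norm_le_two_mul_rL {z : E × StrongDual ℝ E} (hz : 0 ≤ z.2 z.1) :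
    ‖z‖ ^ 2 ≤ 2 * rL z.1 z.2 := by
  have hmax : ‖z‖ ^ 2 ≤ ‖z.1‖ ^ 2 + ‖z.2‖ ^ 2 := by
    rw [Prod.norm_def]
    rcases le_total ‖z.1‖ ‖z.2‖ with h | h
    · rw [max_eq_right h]; nlinarith [sq_nonneg ‖z.1‖]
    · rw [max_eq_left h]; nlinarith [sq_nonneg ‖z.2‖]
  unfold rL
  linarith

theorem norm_lt_of_rL_lt {z : E × StrongDual ℝ E} {ε : ℝ} (hε : 0 ≤ ε) (hz : 0 ≤ z.2 z.1)
    (h : rL z.1 z.2 < ε ^ 2 / 2) : ‖z‖ < ε := by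
  have hsq : ‖z‖ ^ 2 < ε ^ 2 := by linarith [sq_norm_le_two_mul_rL hz]
  exact (pow_lt_pow_iff_left₀ (norm_nonneg z) hε two_ne_zero).mp hsq

end

theorem stmt13_general {E : Type*} [NormedAddCommGroup E] [NormedSpace ℝ E]
    (A : Set (E × StrongDual ℝ E)) (hA : RLDense A) :
    monoPolar A ⊆ closure A := by
  intro p hp
  rw [Metric.mem_closure_iff]
  intro ε hε
  obtain ⟨q, hqA, hq⟩ := hA p.1 p.2 (ε ^ 2 / 2) (by positivity)
  refine ⟨q, hqA, ?_⟩
  rw [dist_comm, dist_eq_norm]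
  exact norm_lt_of_rL_lt hε.le (hp q hqA) hq

theorem stmt13 {E : Type*} [NormedAddCommGroup E] [NormedSpace ℝ E] [CompleteSpace E]
    (A : Set (E × StrongDual ℝ E)) (hA : RLDense A) :
    monoPolar A ⊆ closure A :=
  stmt13_general A hA
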